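/- arXiv:2605.04780 — 5 statements merged into one kernel-verified Lean document; each statement's English description precedes it below -/
import Mathlib

section
/- Let p be an odd prime and n ≥ 1. For every 0 ≤ k ≤ n, any two subgroups of the dihedral group DihedralGroup (p^n) of order 2·p^k are conjugate in DihedralGroup (p^n). -/
open DihedralGroup AddSubgroup

private lemma dih_r_inv {m : ℕ} (a : ZMod m) : (r a)⁻¹ = r (-a) := rfl

private lemma dih_isUnit_two {m : ℕ} (hm : Odd m) : IsUnit (2 : ZMod m) := by
  have : ((2 : ℕ) : ZMod m) = (2 : ZMod m) := by norm_cast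
  rw [← this, ZMod.isUnit_iff_coprime]
  exact Nat.coprime_two_left.mpr hm

private lemma dih_struct (m : ℕ) [NeZero m] (hm : Odd m) (d : ℕ) (hd : d ∣ m) (hd0 : d ≠ 0)
    (H : Subgroup (DihedralGroup m)) (hH : Nat.card H = 2 * d) :
    ∃ i₀ : ZMod m,
      (∀ a : ZMod m, r a ∈ H ↔ a ∈ zmultiples ((m / d : ℕ) : ZMod m)) ∧
      (∀ a : ZMod m, sr a ∈ H ↔ a - i₀ ∈ zmultiples ((m / d : ℕ) : ZMod m)) := by
  haveI : Fact (Nat.Prime 2) := ⟨Nat.prime_two⟩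
  have h2 : IsUnit (2 : ZMod m) := dih_isUnit_two hm
  obtain ⟨g, hg⟩ := exists_prime_orderOf_dvd_card' 2 (hH ▸ Dvd.intro d rfl)
  rw [← Subgroup.orderOf_coe] at hg
  rcases hc : (g : DihedralGroup m) with a | i₀
  · exfalso
    rw [hc] at hg
    have h1 : (r a) ^ 2 = 1 := by rw [← hg]; exact pow_orderOf_eq_one _
    have h2' : r (a + a) = r 0 := by
      rw [pow_two, r_mul_r] at h1; exact h1
    have ha : a + a = 0 := by injection h2'
    have ha0 : a = 0 := by
      have : (2 : ZMod m) * a = 0 := by rw [two_mul]; exact ha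
      exact (h2.mul_right_eq_zero).mp this
    rw [ha0, ← one_def, orderOf_one] at hg
    norm_num at hg
  · -- the rotation part of H
    set A : AddSubgroup (ZMod m) :=
      { carrier := {a | r a ∈ H}
        zero_mem' := by show r 0 ∈ H; rw [← one_def]; exact H.one_mem
        add_mem' := fun {x y} hx hy => by
          show r (x + y) ∈ H; rw [← r_mul_r]; exact H.mul_mem hx hy
        neg_mem' := fun {x} hx => by
          show r (-x) ∈ H; rw [← dih_r_inv]; exact H.inv_mem hx } with hA
    have hmemA : ∀ a : ZMod m, a ∈ A ↔ r a ∈ H := fun a => Iff.rfl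
    have hsr0 : sr i₀ ∈ H := hc ▸ g.2
    have hsr : ∀ a : ZMod m, sr a ∈ H ↔ a - i₀ ∈ A := by
      intro a
      rw [hmemA]
      constructor
      · intro h
        have := H.mul_mem hsr0 h
        rwa [sr_mul_sr] at this
      · intro h
        have := H.mul_mem hsr0 h
        rwa [sr_mul_r, add_sub_cancel] at this
    -- the set decomposition of H
    have hset : (H : Set (DihedralGroup m)) =
        r '' (A : Set (ZMod m)) ∪ sr '' ((i₀ + ·) '' (A : Set (ZMod m))) := by
      ext x
      rcases x with a | a
      · simp only [SetLike.mem_coe, Set.mem_union, Set.mem_image]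
        constructor
        · intro h
          exact Or.inl ⟨a, (hmemA a).mpr h, rfl⟩
        · rintro (⟨b, hb, hb2⟩ | ⟨b, hb, hb2⟩)
          · injection hb2 with h'; rw [← h']; exact (hmemA b).mp hb
          · exact absurd hb2 (by simp)
      · simp only [SetLike.mem_coe, Set.mem_union, Set.mem_image]
        constructor
        · intro h
          refine Or.inr ⟨a, ⟨a - i₀, (hsr a).mp h, by ring⟩, rfl⟩
        · rintro (⟨b, hb, hb2⟩ | ⟨b, ⟨c, hc', rfl⟩, hb2⟩)
          · exact absurd hb2 (by simp)
          · injection hb2 with h'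
            rw [← h']
            exact (hsr _).mpr (by simpa using hc')
    -- counting
    have hrinj : Function.Injective (r : ZMod m → DihedralGroup m) := by
      intro x y h; injection h
    have hsrinj : Function.Injective (sr : ZMod m → DihedralGroup m) := by
      intro x y h; injection h
    have hAfin : (A : Set (ZMod m)).Finite := Set.toFinite _
    have hdisj : Disjoint (r '' (A : Set (ZMod m)))
        (sr '' ((i₀ + ·) '' (A : Set (ZMod m)))) := by
      rw [Set.disjoint_left]
      rintro x ⟨b, _, rfl⟩ ⟨c, _, hc2⟩
      simp at hc2
    have hcardH : Nat.card H = ((H : Set (DihedralGroup m))).ncard := Nat.card_coe_set_eq _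
    have hcardA : Nat.card A = ((A : Set (ZMod m))).ncard := Nat.card_coe_set_eq _
    have hcount : Nat.card H = 2 * Nat.card A := by
      rw [hcardH, hset, Set.ncard_union_eq hdisj (hAfin.image _) ((hAfin.image _).image _),
        Set.ncard_image_of_injective _ hrinj, Set.ncard_image_of_injective _ hsrinj,
        Set.ncard_image_of_injective _ (add_right_injective i₀), hcardA]
      ring
    have hAcard : Nat.card A = d := by
      rw [hcount] at hH
      omega
    -- the canonical subgroup
    set Z := zmultiples ((m / d : ℕ) : ZMod m) with hZdef
    have hdvd' : m / d ∣ m := Nat.div_dvd_of_dvd hd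
    have hZcard : Nat.card Z = d := by
      rw [hZdef, Nat.card_zmultiples, ZMod.addOrderOf_coe _ (NeZero.ne m),
        Nat.gcd_eq_right hdvd', Nat.div_div_self hd (NeZero.ne m)]
    have hle : A ≤ Z := by
      intro x hx
      have h1 : Nat.card A • (⟨x, hx⟩ : A) = 0 := card_nsmul_eq_zero'
      have hdx : d • x = 0 := by
        have := congrArg (Subtype.val) h1
        rw [hAcard] at this
        simpa using this
      have hv : ((x.val : ℕ) : ZMod m) = x := ZMod.natCast_zmod_val x
      have hdvx : m ∣ d * x.val := by
        rw [← ZMod.natCast_eq_zero_iff]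
        push_cast
        rw [hv, ← nsmul_eq_mul]
        exact_mod_cast hdx
      have hmd : d * (m / d) = m := Nat.mul_div_cancel' hd
      have : (m / d) ∣ x.val := by
        have hstep : d * (m / d) ∣ d * x.val := by rw [hmd]; exact hdvx
        exact (Nat.mul_dvd_mul_iff_left (Nat.pos_of_ne_zero hd0)).mp hstep
      obtain ⟨j, hj⟩ := this
      refine mem_zmultiples_iff.mpr ⟨(j : ℤ), ?_⟩
      have : x = (((m / d) * j : ℕ) : ZMod m) := by rw [← hj, hv]
      rw [this]
      push_cast
      rw [zsmul_eq_mul]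
      push_cast
      ring
    have hAZ : A = Z := AddSubgroup.eq_of_le_of_card_ge hle (by rw [hZcard, hAcard])
    exact ⟨i₀, fun a => by rw [← hAZ]; exact (hmemA a).symm,
      fun a => by rw [← hAZ]; exact hsr a⟩

theorem dihedral_subgroups_of_order_two_p_pow_conjugate (p n : ℕ) (hp : p.Prime)
    (hodd : Odd p) (hn : 1 ≤ n) :
    ∀ k ≤ n, ∀ H K : Subgroup (DihedralGroup (p ^ n)),
      Nat.card H = 2 * p ^ k → Nat.card K = 2 * p ^ k →
      ∃ g : DihedralGroup (p ^ n),
        Subgroup.map (MulAut.conj g).toMonoidHom H = K := by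
  intro k hk H K hHcard hKcard
  have hm0 : (p ^ n) ≠ 0 := pow_ne_zero n hp.pos.ne'
  haveI : NeZero (p ^ n) := ⟨hm0⟩
  have hmodd : Odd (p ^ n) := hodd.pow
  have hdvd : p ^ k ∣ p ^ n := pow_dvd_pow p hk
  have hd0 : p ^ k ≠ 0 := pow_ne_zero k hp.pos.ne'
  obtain ⟨i₀, hH1, hH2⟩ := dih_struct _ hmodd _ hdvd hd0 H hHcard
  obtain ⟨i₁, hK1, hK2⟩ := dih_struct _ hmodd _ hdvd hd0 K hKcard
  obtain ⟨u, hu⟩ := dih_isUnit_two (m := p ^ n) hmodd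
  set t : ZMod (p ^ n) := (↑u⁻¹ : ZMod (p ^ n)) * (i₀ - i₁) with ht
  have h2t : t + t = i₀ - i₁ := by
    calc t + t = 2 * t := (two_mul t).symm
    _ = ↑u * (↑u⁻¹ * (i₀ - i₁)) := by rw [hu, ht]
    _ = i₀ - i₁ := by rw [← mul_assoc, Units.mul_inv, one_mul]
  refine ⟨r t, ?_⟩
  ext x
  rw [Subgroup.mem_map_equiv]
  rcases x with a | a
  · have hx : (MulAut.conj (r t)).symm (r a) = r a := by
      rw [MulAut.conj_symm_apply, dih_r_inv, r_mul_r, r_mul_r]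
      congr 1
      ring
    rw [hx, hH1, hK1]
  · have hx : (MulAut.conj (r t)).symm (sr a) = sr (a + (i₀ - i₁)) := by
      rw [MulAut.conj_symm_apply, dih_r_inv, r_mul_sr, sr_mul_r]
      congr 1
      rw [← h2t]
      ring
    rw [hx, hH2, hK2]
    have harg : a + (i₀ - i₁) - i₀ = a - i₁ := by ring
    rw [harg]
end

section
/- Let p be an odd prime and n ≥ 1. Define, for a subgroup H of DihedralGroup (p^n), the rank f(H) = v_p(|H|) + (1 if |H| is even, 0 otherwise), where v_p denotes the p-adic valuation of a natural number. Then f is strictly order-preserving on the subgroup lattice: if H is a subgroup strictly contained in a subgroup K of DihedralGroup (p^n), then f(H) < f(K). -/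
theorem dihedral_rank_strict_mono (p n : ℕ) (hp : p.Prime) (hodd : Odd p)
    (hn : 1 ≤ n) (H K : Subgroup (DihedralGroup (p ^ n))) (hHK : H < K) :
    padicValNat p (Nat.card H) + (if 2 ∣ Nat.card H then 1 else 0) <
      padicValNat p (Nat.card K) + (if 2 ∣ Nat.card K then 1 else 0) := by
  haveI : Fact p.Prime := ⟨hp⟩
  haveI : NeZero (p ^ n) := ⟨pow_ne_zero n hp.pos.ne'⟩
  have hp2 : p ≠ 2 := by rintro rfl; simp [Nat.odd_iff] at hodd
  have hcardG : Nat.card (DihedralGroup (p ^ n)) = 2 * p ^ n :=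
    DihedralGroup.nat_card
  -- structure of divisors of 2 * p ^ n
  have key : ∀ d : ℕ, d ∣ 2 * p ^ n → d ≠ 0 →
      (¬ 2 ∣ d → d = p ^ padicValNat p d) ∧
      (2 ∣ d → d = 2 * p ^ padicValNat p d) := by
    intro d hd hd0
    constructor
    · intro h2
      have hcop : Nat.Coprime d 2 :=
        ((Nat.Prime.coprime_iff_not_dvd Nat.prime_two).mpr h2).symm
      have hdp : d ∣ p ^ n := hcop.dvd_of_dvd_mul_left hd
      obtain ⟨j, hj, rfl⟩ := (Nat.dvd_prime_pow hp).mp hdp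
      rw [padicValNat.prime_pow]
    · rintro ⟨d', rfl⟩
      have hd' : d' ∣ p ^ n := (mul_dvd_mul_iff_left (two_ne_zero)).mp hd
      obtain ⟨j, hj, rfl⟩ := (Nat.dvd_prime_pow hp).mp hd'
      rw [padicValNat.mul two_ne_zero (pow_ne_zero _ hp.pos.ne'),
        padicValNat.prime_pow, padicValNat.eq_zero_of_not_dvd]
      · simp
      · exact fun h => hp2 ((Nat.prime_dvd_prime_iff_eq hp Nat.prime_two).mp h)
  have hle : H ≤ K := hHK.le
  have hdvdK : Nat.card K ∣ 2 * p ^ n := hcardG ▸ K.card_subgroup_dvd_card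
  have hdvd : Nat.card H ∣ Nat.card K := Subgroup.card_dvd_of_le hle
  have hdvdH : Nat.card H ∣ 2 * p ^ n := hdvd.trans hdvdK
  have hH0 : Nat.card H ≠ 0 := Nat.card_pos.ne'
  have hK0 : Nat.card K ≠ 0 := Nat.card_pos.ne'
  have hne : Nat.card H ≠ Nat.card K := fun h =>
    hHK.ne (Subgroup.eq_of_le_of_card_ge hle h.ge)
  obtain ⟨kH1, kH2⟩ := key _ hdvdH hH0
  obtain ⟨kK1, kK2⟩ := key _ hdvdK hK0
  by_cases h2H : 2 ∣ Nat.card H <;> by_cases h2K : 2 ∣ Nat.card K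
  · -- both even
    have eH := kH2 h2H; have eK := kK2 h2K
    rw [eH, eK, mul_dvd_mul_iff_left (two_ne_zero (α := ℕ))] at hdvd
    have hjk : padicValNat p (Nat.card H) ≤ padicValNat p (Nat.card K) :=
      (Nat.pow_dvd_pow_iff_le_right hp.one_lt).mp hdvd
    have : padicValNat p (Nat.card H) ≠ padicValNat p (Nat.card K) := by
      intro h; apply hne; rw [eH, eK, h]
    simp only [h2H, h2K, if_pos]
    omega
  ·
    exact absurd (h2H.trans hdvd) h2K
  · -- H odd K even
    have eH := kH1 h2H; have eK := kK2 h2K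
    rw [eH, eK] at hdvd
    have hcop : Nat.Coprime (p ^ padicValNat p (Nat.card H)) 2 :=
      Nat.Coprime.pow_left _ ((Nat.coprime_primes hp Nat.prime_two).mpr hp2)
    have := hcop.dvd_of_dvd_mul_left hdvd
    have hjk : padicValNat p (Nat.card H) ≤ padicValNat p (Nat.card K) :=
      (Nat.pow_dvd_pow_iff_le_right hp.one_lt).mp this
    simp only [h2H, h2K, if_pos, if_neg, not_false_iff]
    omega
  · -- both odd
    have eH := kH1 h2H; have eK := kK1 h2K
    rw [eH, eK] at hdvd
    have hjk : padicValNat p (Nat.card H) ≤ padicValNat p (Nat.card K) :=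
      (Nat.pow_dvd_pow_iff_le_right hp.one_lt).mp hdvd
    have : padicValNat p (Nat.card H) ≠ padicValNat p (Nat.card K) := by
      intro h; apply hne; rw [eH, eK, h]
    simp only [h2H, h2K, if_neg, not_false_iff]
    omega
end

section
/- Let p be an odd prime and n ≥ 1. Say a subgroup H of DihedralGroup (p^n) has rank j if |H| = p^j or |H| = 2·p^(j−1). For 0 ≤ j < k ≤ n+1, let α(j,k) be the number of orbits, under the diagonal conjugation action of DihedralGroup (p^n), of the set of pairs (H,K) of subgroups with H strictly contained in K, rank of H equal to j, and rank of K equal to k. Then α(0,n+1) = 1; α(0,k) = 2 for 1 ≤ k ≤ n; α(j,n+1) = 2 for 1 ≤ j ≤ n; and α(j,k) = 3 for 1 ≤ j < k ≤ n. -/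
/-- Simultaneous conjugacy of pairs of subgroups. -/
def PairSubgroupConj {G : Type*} [Group G] (P Q : Subgroup G × Subgroup G) : Prop :=
  ∃ g : G, Subgroup.map (MulAut.conj g).toMonoidHom P.1 = Q.1 ∧
    Subgroup.map (MulAut.conj g).toMonoidHom P.2 = Q.2

/-- A subgroup of the dihedral group `DihedralGroup (p ^ n)` has rank `j` if its
order is `p ^ j` (cyclic type) or `2 * p ^ (j - 1)` with `j ≥ 1` (dihedral type). -/
def HasRank {G : Type*} [Group G] (p : ℕ) (H : Subgroup G) (j : ℕ) : Prop :=
  Nat.card H = p ^ j ∨ (1 ≤ j ∧ Nat.card H = 2 * p ^ (j - 1))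

/-- `alphaD G p j k` is the number of orbits, under simultaneous conjugation by `G`,
of pairs `(H, K)` of subgroups with `H < K`, `H` of rank `j` and `K` of rank `k`. -/
noncomputable def alphaD (G : Type*) [Group G] (p j k : ℕ) : ℕ :=
  Nat.card (Quot (fun P Q : {P : Subgroup G × Subgroup G //
      P.1 < P.2 ∧ HasRank p P.1 j ∧ HasRank p P.2 k} =>
    PairSubgroupConj P.1 Q.1))



namespace DihedralAlphaAux

open DihedralGroup Subgroup

variable {m : ℕ}

theorem inv_r (a : ZMod m) : (r a)⁻¹ = r (-a) := rfl
theorem inv_sr (a : ZMod m) : (sr a)⁻¹ = sr a := rfl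

/-- rotation subgroup determined by an additive subgroup of `ZMod m`. -/
def rsub (A : AddSubgroup (ZMod m)) : Subgroup (DihedralGroup m) where
  carrier := {x | ∃ a ∈ A, x = r a}
  one_mem' := ⟨0, A.zero_mem, rfl⟩
  mul_mem' := by
    rintro _ _ ⟨a, ha, rfl⟩ ⟨b, hb, rfl⟩
    exact ⟨a + b, A.add_mem ha hb, rfl⟩
  inv_mem' := by
    rintro _ ⟨a, ha, rfl⟩
    exact ⟨-a, A.neg_mem ha, rfl⟩

theorem mem_rsub {A : AddSubgroup (ZMod m)} {x : DihedralGroup m} :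
    x ∈ rsub A ↔ ∃ a ∈ A, x = r a := Iff.rfl

@[simp] theorem r_mem_rsub {A : AddSubgroup (ZMod m)} {a : ZMod m} :
    r a ∈ rsub A ↔ a ∈ A := by
  rw [mem_rsub]
  constructor
  · rintro ⟨b, hb, h⟩
    injection h with h'
    rwa [h']
  · intro ha; exact ⟨a, ha, rfl⟩

@[simp] theorem sr_notMem_rsub {A : AddSubgroup (ZMod m)} {a : ZMod m} :
    sr a ∉ rsub A := by
  rw [mem_rsub]
  rintro ⟨b, hb, h⟩
  exact absurd h (by simp)

/-- dihedral subgroup: rotations in `A`, reflections in the coset `c + A`. -/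
def dsub (A : AddSubgroup (ZMod m)) (c : ZMod m) : Subgroup (DihedralGroup m) where
  carrier := {x | (∃ a ∈ A, x = r a) ∨ ∃ b, b - c ∈ A ∧ x = sr b}
  one_mem' := Or.inl ⟨0, A.zero_mem, rfl⟩
  mul_mem' := by
    rintro _ _ (⟨a, ha, rfl⟩ | ⟨a, ha, rfl⟩) (⟨b, hb, rfl⟩ | ⟨b, hb, rfl⟩)
    · exact Or.inl ⟨a + b, A.add_mem ha hb, rfl⟩
    · refine Or.inr ⟨b - a, ?_, (r_mul_sr a b)⟩
      have h := A.sub_mem hb ha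
      have e : b - a - c = b - c - a := by ring
      rwa [e]
    · refine Or.inr ⟨a + b, ?_, (sr_mul_r a b)⟩
      have h := A.add_mem ha hb
      have e : a + b - c = a - c + b := by ring
      rwa [e]
    · refine Or.inl ⟨b - a, ?_, (sr_mul_sr a b)⟩
      have h := A.sub_mem hb ha
      have e : b - a = b - c - (a - c) := by ring
      rwa [← e] at h
  inv_mem' := by
    rintro _ (⟨a, ha, rfl⟩ | ⟨a, ha, rfl⟩)
    · exact Or.inl ⟨-a, A.neg_mem ha, rfl⟩
    · exact Or.inr ⟨a, ha, rfl⟩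

theorem mem_dsub {A : AddSubgroup (ZMod m)} {c : ZMod m} {x : DihedralGroup m} :
    x ∈ dsub A c ↔ (∃ a ∈ A, x = r a) ∨ ∃ b, b - c ∈ A ∧ x = sr b := Iff.rfl

@[simp] theorem r_mem_dsub {A : AddSubgroup (ZMod m)} {c a : ZMod m} :
    r a ∈ dsub A c ↔ a ∈ A := by
  rw [mem_dsub]
  constructor
  · rintro (⟨b, hb, h⟩ | ⟨b, hb, h⟩)
    · injection h with h'; rwa [h']
    · exact absurd h (by simp)
  · intro ha; exact Or.inl ⟨a, ha, rfl⟩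

@[simp] theorem sr_mem_dsub {A : AddSubgroup (ZMod m)} {c b : ZMod m} :
    sr b ∈ dsub A c ↔ b - c ∈ A := by
  rw [mem_dsub]
  constructor
  · rintro (⟨a, ha, h⟩ | ⟨a, ha, h⟩)
    · exact absurd h (by simp)
    · injection h with h'; rwa [h']
  · intro hb; exact Or.inr ⟨b, hb, rfl⟩

theorem rsub_mono {A B : AddSubgroup (ZMod m)} (h : A ≤ B) : rsub A ≤ rsub B := by
  intro x hx
  rw [mem_rsub] at hx ⊢
  obtain ⟨a, ha, rfl⟩ := hx
  exact ⟨a, h ha, rfl⟩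

theorem rsub_le_dsub {A B : AddSubgroup (ZMod m)} (c : ZMod m) (h : A ≤ B) :
    rsub A ≤ dsub B c := by
  intro x hx
  rw [mem_rsub] at hx
  obtain ⟨a, ha, rfl⟩ := hx
  exact Or.inl ⟨a, h ha, rfl⟩

theorem dsub_mono {A B : AddSubgroup (ZMod m)} (c : ZMod m) (h : A ≤ B) :
    dsub A c ≤ dsub B c := by
  intro x hx
  rw [mem_dsub] at hx ⊢
  rcases hx with ⟨a, ha, rfl⟩ | ⟨b, hb, rfl⟩
  · exact Or.inl ⟨a, h ha, rfl⟩
  · exact Or.inr ⟨b, h hb, rfl⟩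

theorem dsub_congr {A : AddSubgroup (ZMod m)} {c d : ZMod m} (h : c - d ∈ A) :
    dsub A c = dsub A d := by
  ext x
  rcases x with a | a
  · simp
  · rw [sr_mem_dsub, sr_mem_dsub]
    constructor
    · intro h1
      have h2 := A.add_mem h1 h
      have e : a - d = a - c + (c - d) := by ring
      rwa [← e] at h2
    · intro h1
      have h2 := A.sub_mem h1 h
      have e : a - c = a - d - (c - d) := by ring
      rwa [← e] at h2

theorem card_rsub [NeZero m] (A : AddSubgroup (ZMod m)) :
    Nat.card (rsub A) = Nat.card A := by
  refine (Nat.card_eq_of_bijective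
    (fun a : A => (⟨r a.1, r_mem_rsub.mpr a.2⟩ : rsub A)) ⟨?_, ?_⟩).symm
  · intro a b h
    have h1 : (r a.1 : DihedralGroup m) = r b.1 := congrArg Subtype.val h
    injection h1 with h2
    exact Subtype.ext h2
  · rintro ⟨x, hx⟩
    rw [mem_rsub] at hx
    obtain ⟨a, ha, rfl⟩ := hx
    exact ⟨⟨a, ha⟩, rfl⟩

theorem card_dsub [NeZero m] (A : AddSubgroup (ZMod m)) (c : ZMod m) :
    Nat.card (dsub A c) = 2 * Nat.card A := by
  have hb : Function.Bijective (fun x : A ⊕ A =>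
      (Sum.elim (fun a : A => (⟨r a.1, r_mem_dsub.mpr a.2⟩ : dsub A c))
        (fun a : A => (⟨sr (c + a.1), by rw [sr_mem_dsub, add_sub_cancel_left]; exact a.2⟩ :
          dsub A c)) x)) := by
    constructor
    · rintro (a | a) (b | b) h <;>
        have h1 := congrArg Subtype.val h <;> simp only [Sum.elim_inl, Sum.elim_inr] at h1
      · injection h1 with h2; exact congrArg Sum.inl (Subtype.ext h2)
      · exact absurd h1 (by simp)
      · exact absurd h1 (by simp)
      · injection h1 with h2; exact congrArg Sum.inr (Subtype.ext (by
          have := add_left_cancel h2; exact this))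
    · rintro ⟨x, hx⟩
      rw [mem_dsub] at hx
      rcases hx with ⟨a, ha, rfl⟩ | ⟨b, hb, rfl⟩
      · exact ⟨Sum.inl ⟨a, ha⟩, rfl⟩
      · refine ⟨Sum.inr ⟨b - c, hb⟩, ?_⟩
        simp only [Sum.elim_inr]
        exact Subtype.ext (show sr (c + (b - c)) = sr b by rw [add_sub_cancel])
  have := Nat.card_eq_of_bijective _ hb
  rw [← this, Nat.card_sum, two_mul]

/-- the additive subgroup of rotation indices of a subgroup. -/
def toAdd (H : Subgroup (DihedralGroup m)) : AddSubgroup (ZMod m) where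
  carrier := {a | r a ∈ H}
  zero_mem' := by show r 0 ∈ H; rw [← one_def]; exact H.one_mem
  add_mem' := by
    intro a b ha hb
    have h := H.mul_mem ha hb
    rwa [r_mul_r] at h
  neg_mem' := by
    intro a ha
    have h := H.inv_mem ha
    rwa [inv_r] at h

theorem mem_toAdd {H : Subgroup (DihedralGroup m)} {a : ZMod m} :
    a ∈ toAdd H ↔ r a ∈ H := Iff.rfl

theorem eq_rsub_of_no_sr (H : Subgroup (DihedralGroup m)) (h : ∀ a, sr a ∉ H) :
    H = rsub (toAdd H) := by
  ext x
  rcases x with a | a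
  · rw [r_mem_rsub, mem_toAdd]
  · exact iff_of_false (h a) sr_notMem_rsub

theorem no_sr_of_odd (H : Subgroup (DihedralGroup m)) (hodd : Odd (Nat.card H)) :
    ∀ a, sr a ∉ H := by
  intro a ha
  have h1 : orderOf (⟨sr a, ha⟩ : H) = 2 := by
    rw [← Subgroup.orderOf_coe]
    exact orderOf_sr a
  have h2 : (2 : ℕ) ∣ Nat.card H := h1 ▸ orderOf_dvd_natCard _
  rw [Nat.odd_iff] at hodd
  omega

theorem eq_dsub_of_sr_mem (H : Subgroup (DihedralGroup m)) {c : ZMod m} (hc : sr c ∈ H) :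
    H = dsub (toAdd H) c := by
  ext x
  rcases x with a | a
  · rw [r_mem_dsub, mem_toAdd]
  · rw [sr_mem_dsub, mem_toAdd]
    constructor
    · intro ha
      have h := H.mul_mem hc ha
      rwa [sr_mul_sr] at h
    · intro ha
      have h := H.mul_mem hc ha
      rwa [sr_mul_r, add_sub_cancel] at h

theorem mem_map_conj {G : Type*} [Group G] (g x : G) (H : Subgroup G) :
    x ∈ Subgroup.map (MulAut.conj g).toMonoidHom H ↔ g⁻¹ * x * g ∈ H := by
  rw [Subgroup.mem_map_equiv, MulAut.conj_symm_apply]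

theorem map_conj_one {G : Type*} [Group G] (H : Subgroup G) :
    Subgroup.map (MulAut.conj (1 : G)).toMonoidHom H = H := by
  ext x
  rw [mem_map_conj]
  simp

theorem card_map_conj {G : Type*} [Group G] (g : G) (H : Subgroup G) :
    Nat.card (Subgroup.map (MulAut.conj g).toMonoidHom H) = Nat.card H :=
  (Nat.card_congr (Subgroup.equivMapOfInjective H _ (MulAut.conj g).injective).toEquiv).symm

theorem map_conj_r_rsub (t : ZMod m) (A : AddSubgroup (ZMod m)) :
    Subgroup.map (MulAut.conj (r t)).toMonoidHom (rsub A) = rsub A := by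
  ext x
  rw [mem_map_conj]
  rcases x with a | a
  · rw [inv_r, r_mul_r, r_mul_r, r_mem_rsub, r_mem_rsub, show -t + a + t = a by ring]
  · rw [inv_r, r_mul_sr, sr_mul_r]
    simp

theorem map_conj_r_dsub (t c : ZMod m) (A : AddSubgroup (ZMod m)) :
    Subgroup.map (MulAut.conj (r t)).toMonoidHom (dsub A c) = dsub A (c - t - t) := by
  ext x
  rw [mem_map_conj]
  rcases x with a | a
  · rw [inv_r, r_mul_r, r_mul_r, r_mem_dsub, r_mem_dsub, show -t + a + t = a by ring]
  · rw [inv_r, r_mul_sr, sr_mul_r, sr_mem_dsub, sr_mem_dsub,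
      show a - -t + t - c = a - (c - t - t) by ring]

theorem map_conj_top {G : Type*} [Group G] (g : G) :
    Subgroup.map (MulAut.conj g).toMonoidHom (⊤ : Subgroup G) = ⊤ := by
  ext x
  rw [mem_map_conj]
  simp

theorem lt_of_le_of_card_lt {G : Type*} [Group G] {H K : Subgroup G} (h : H ≤ K)
    (hc : Nat.card H < Nat.card K) : H < K :=
  h.lt_of_ne (fun e => by rw [e] at hc; exact lt_irrefl _ hc)






variable {m : ℕ}

/-- the kernel of multiplication by `d` on `ZMod m`. -/
def kd (m d : ℕ) : AddSubgroup (ZMod m) where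
  carrier := {x | (d : ZMod m) * x = 0}
  zero_mem' := by simp
  add_mem' := by
    intro a b ha hb
    simp only [Set.mem_setOf_eq] at ha hb ⊢
    rw [mul_add, ha, hb, add_zero]
  neg_mem' := by
    intro a ha
    simp only [Set.mem_setOf_eq] at ha ⊢
    rw [mul_neg, ha, neg_zero]

theorem mem_kd {d : ℕ} {x : ZMod m} : x ∈ kd m d ↔ (d : ZMod m) * x = 0 := Iff.rfl

theorem kd_mono {d e : ℕ} (h : d ∣ e) : kd m d ≤ kd m e := by
  intro x hx
  rw [mem_kd] at hx ⊢
  obtain ⟨f, rfl⟩ := h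
  push_cast
  rw [mul_comm (d : ZMod m) (f : ZMod m), mul_assoc, hx, mul_zero]

theorem card_kd (hm : m ≠ 0) {d : ℕ} (hd : d ∣ m) : Nat.card (kd m d) = d := by
  haveI : NeZero m := ⟨hm⟩
  have hd0 : d ≠ 0 := by rintro rfl; exact hm (Nat.eq_zero_of_zero_dvd hd)
  have hkey : kd m d = AddSubgroup.zmultiples ((m / d : ℕ) : ZMod m) := by
    ext x
    rw [mem_kd, AddSubgroup.mem_zmultiples_iff]
    constructor
    · intro hx
      have hxval : ((x.val : ℕ) : ZMod m) = x := by rw [ZMod.natCast_val, ZMod.cast_id]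
      have h1 : ((d * x.val : ℕ) : ZMod m) = 0 := by push_cast; rw [hxval, hx]
      rw [ZMod.natCast_eq_zero_iff] at h1
      have h2 : m / d ∣ x.val := by
        have hmd : d * (m / d) = m := Nat.mul_div_cancel' hd
        have h1' : d * (m / d) ∣ d * x.val := by rw [hmd]; exact h1
        exact (Nat.mul_dvd_mul_iff_left (Nat.pos_of_ne_zero hd0)).mp h1'
      obtain ⟨k, hk⟩ := h2
      refine ⟨(k : ℤ), ?_⟩
      have h3 : ((m / d * k : ℕ) : ZMod m) = x := by rw [← hk, hxval]
      rw [← h3, zsmul_eq_mul]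
      push_cast
      ring
    · rintro ⟨k, rfl⟩
      have h0 : (d : ZMod m) * ((m / d : ℕ) : ZMod m) = 0 := by
        rw [← Nat.cast_mul, Nat.mul_div_cancel' hd, ZMod.natCast_self]
      rw [zsmul_eq_mul, show (d : ZMod m) * ((k : ℤ) * ((m / d : ℕ) : ZMod m))
        = ((k : ℤ) : ZMod m) * ((d : ZMod m) * ((m / d : ℕ) : ZMod m)) by ring, h0, mul_zero]
  rw [hkey, Nat.card_zmultiples, ZMod.addOrderOf_coe _ hm,
    Nat.gcd_eq_right (Nat.div_dvd_of_dvd hd), Nat.div_div_self hd hm]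

theorem eq_kd (hm : m ≠ 0) (A : AddSubgroup (ZMod m)) : A = kd m (Nat.card A) := by
  haveI : NeZero m := ⟨hm⟩
  have hle : A ≤ kd m (Nat.card A) := by
    intro x hx
    rw [mem_kd]
    have h1 : (Nat.card A) • (⟨x, hx⟩ : A) = 0 := card_nsmul_eq_zero'
    have h2 : (Nat.card A) • x = 0 := by
      have h3 := congrArg (Subtype.val) h1
      simpa [-card_nsmul_eq_zero'] using h3
    rw [← h2, nsmul_eq_mul]
  have hdvd : Nat.card A ∣ m := by
    have h4 := AddSubgroup.card_addSubgroup_dvd_card A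
    simpa [Nat.card_zmod] using h4
  exact AddSubgroup.eq_of_le_of_card_ge hle (le_of_eq (card_kd hm hdvd))






def CC (p n j : ℕ) : Subgroup (DihedralGroup (p ^ n)) := rsub (kd (p ^ n) (p ^ j))

def DD (p n i : ℕ) : Subgroup (DihedralGroup (p ^ n)) := dsub (kd (p ^ n) (p ^ i)) 0

variable {p n : ℕ}

theorem not_two_dvd_pow (hodd : Odd p) (k : ℕ) : ¬ (2 ∣ p ^ k) := by
  intro h
  have h1 : Odd (p ^ k) := hodd.pow
  rw [Nat.odd_iff] at h1
  omega

theorem card_CC (hp : p.Prime) {j : ℕ} (hj : j ≤ n) : Nat.card (CC p n j) = p ^ j := by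
  have hm : p ^ n ≠ 0 := pow_ne_zero n hp.pos.ne'
  haveI : NeZero (p ^ n) := ⟨hm⟩
  rw [CC, card_rsub, card_kd hm (pow_dvd_pow p hj)]

theorem card_DD (hp : p.Prime) {i : ℕ} (hi : i ≤ n) : Nat.card (DD p n i) = 2 * p ^ i := by
  have hm : p ^ n ≠ 0 := pow_ne_zero n hp.pos.ne'
  haveI : NeZero (p ^ n) := ⟨hm⟩
  rw [DD, card_dsub, card_kd hm (pow_dvd_pow p hi)]

theorem card_G (hp : p.Prime) :
    Nat.card (DihedralGroup (p ^ n)) = 2 * p ^ n := by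
  have hm : p ^ n ≠ 0 := pow_ne_zero n hp.pos.ne'
  haveI : NeZero (p ^ n) := ⟨hm⟩
  rw [Nat.card_eq_fintype_card, DihedralGroup.card]

theorem eq_CC (hp : p.Prime) (hodd : Odd p) {j : ℕ} (hj : j ≤ n)
    (H : Subgroup (DihedralGroup (p ^ n))) (hcard : Nat.card H = p ^ j) : H = CC p n j := by
  have hm : p ^ n ≠ 0 := pow_ne_zero n hp.pos.ne'
  haveI : NeZero (p ^ n) := ⟨hm⟩
  have h1 : H = rsub (toAdd H) :=
    eq_rsub_of_no_sr H (no_sr_of_odd H (by rw [hcard]; exact hodd.pow))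
  have h2 : Nat.card (toAdd H) = p ^ j := by
    rw [← card_rsub (toAdd H), ← h1, hcard]
  rw [h1, eq_kd hm (toAdd H), h2]
  rfl

theorem exists_c_eq_dsub (hp : p.Prime) (hodd : Odd p) {j : ℕ} (hj2 : j ≤ n)
    (H : Subgroup (DihedralGroup (p ^ n))) (hcard : Nat.card H = 2 * p ^ (j - 1)) :
    ∃ c, H = dsub (kd (p ^ n) (p ^ (j - 1))) c := by
  have hm : p ^ n ≠ 0 := pow_ne_zero n hp.pos.ne'
  haveI : NeZero (p ^ n) := ⟨hm⟩
  have hsr : ∃ c, sr c ∈ H := by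
    by_contra hno
    push_neg at hno
    have h1 : H = rsub (toAdd H) := eq_rsub_of_no_sr H hno
    have h2 : Nat.card (toAdd H) ∣ p ^ n := by
      have h4 := AddSubgroup.card_addSubgroup_dvd_card (toAdd H)
      simpa [Nat.card_zmod] using h4
    rw [h1, card_rsub] at hcard
    rw [hcard] at h2
    exact not_two_dvd_pow hodd n ((dvd_mul_right 2 _).trans h2)
  obtain ⟨c, hc⟩ := hsr
  have h1 : H = dsub (toAdd H) c := eq_dsub_of_sr_mem H hc
  have h2 : Nat.card (toAdd H) = p ^ (j - 1) := by
    have h5 := hcard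
    rw [h1, card_dsub] at h5
    omega
  refine ⟨c, ?_⟩
  rw [h1, eq_kd hm (toAdd H), h2]

theorem exists_half (hodd : Odd p) (c : ZMod (p ^ n)) : ∃ t, t + t = c := by
  have hcop : Nat.Coprime 2 (p ^ n) :=
    (Nat.Prime.coprime_iff_not_dvd Nat.prime_two).mpr (not_two_dvd_pow hodd n)
  set u := ZMod.unitOfCoprime 2 hcop with hu
  refine ⟨(↑u⁻¹ : ZMod (p ^ n)) * c, ?_⟩
  have hu2 : ((u : (ZMod (p ^ n))ˣ) : ZMod (p ^ n)) = 2 := by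
    rw [hu, ZMod.coe_unitOfCoprime]
    norm_num
  rw [← two_mul, ← hu2, ← mul_assoc, u.mul_inv, one_mul]

theorem rank_top (hp : p.Prime) (hodd : Odd p) (K : Subgroup (DihedralGroup (p ^ n)))
    (hK : HasRank p K (n + 1)) : K = ⊤ := by
  have hm : p ^ n ≠ 0 := pow_ne_zero n hp.pos.ne'
  haveI : NeZero (p ^ n) := ⟨hm⟩
  have hdvd : Nat.card K ∣ 2 * p ^ n := by
    have h := Subgroup.card_subgroup_dvd_card K
    rwa [card_G hp] at h
  unfold HasRank at hK
  rcases hK with hK | ⟨-, hK⟩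
  · exfalso
    rw [hK, pow_succ, mul_comm (p ^ n) p, mul_comm 2 (p ^ n), mul_comm p (p ^ n)] at hdvd
    have hp2 : p ∣ 2 := (Nat.mul_dvd_mul_iff_left (pow_pos hp.pos n)).mp hdvd
    have : p = 2 := (Nat.prime_dvd_prime_iff_eq hp Nat.prime_two).mp hp2
    rw [Nat.odd_iff] at hodd
    omega
  · refine Subgroup.eq_top_of_card_eq K ?_
    rw [hK, card_G hp]
    simp

theorem rank_zero (H : Subgroup (DihedralGroup (p ^ n))) (hH : HasRank p H 0) : H = ⊥ := by
  unfold HasRank at hH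
  rcases hH with hH | ⟨h0, -⟩
  · rw [pow_zero] at hH
    exact Subgroup.card_eq_one.mp hH
  · omega

theorem quot_card {α : Type*} (rel : α → α → Prop) (s : ℕ) (ι : α → Fin s) (rp : Fin s → α)
    (h1 : ∀ a b, rel a b → ι a = ι b) (h2 : ∀ i, ι (rp i) = i) (h3 : ∀ a, rel (rp (ι a)) a) :
    Nat.card (Quot rel) = s := by
  have e : Quot rel ≃ Fin s :=
    { toFun := Quot.lift ι h1
      invFun := fun i => Quot.mk rel (rp i)
      left_inv := fun q => Quot.inductionOn q fun a => Quot.sound (h3 a)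
      right_inv := fun i => h2 i }
  rw [Nat.card_congr e, Nat.card_eq_fintype_card, Fintype.card_fin]








theorem alpha4 (hp : p.Prime) (hodd : Odd p) {j k : ℕ} (hj : 1 ≤ j) (hjk : j < k)
    (hk : k ≤ n) : alphaD (DihedralGroup (p ^ n)) p j k = 3 := by
  have hm : p ^ n ≠ 0 := pow_ne_zero n hp.pos.ne'
  haveI : NeZero (p ^ n) := ⟨hm⟩
  have hjn : j ≤ n := le_trans hjk.le hk
  have hj1n : j - 1 ≤ n := by omega
  have hk1n : k - 1 ≤ n := by omega
  have hk1 : 1 ≤ k := by omega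
  have hjk1 : j ≤ k - 1 := by omega
  have e1 : ¬ (2 ∣ p ^ j) := not_two_dvd_pow hodd j
  have e2 : ¬ (2 ∣ p ^ k) := not_two_dvd_pow hodd k
  have e3 : (2:ℕ) ∣ 2 * p ^ (j - 1) := dvd_mul_right 2 _
  have e4 : (2:ℕ) ∣ 2 * p ^ (k - 1) := dvd_mul_right 2 _
  have cCCj := card_CC (n := n) hp hjn
  have cCCk := card_CC (n := n) hp hk
  have cDDj := card_DD (n := n) hp hj1n
  have cDDk := card_DD (n := n) hp hk1n
  have hpowjk : p ^ j < p ^ k := Nat.pow_lt_pow_right hp.one_lt hjk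
  have hpowjk1 : p ^ j ≤ p ^ (k - 1) := Nat.pow_le_pow_right hp.one_le hjk1
  have hposk1 : 0 < p ^ (k - 1) := pow_pos hp.pos _
  have hpowj1k1 : p ^ (j - 1) < p ^ (k - 1) := Nat.pow_lt_pow_right hp.one_lt (by omega)
  have lt0 : CC p n j < CC p n k :=
    lt_of_le_of_card_lt (rsub_mono (kd_mono (pow_dvd_pow p hjk.le)))
      (by rw [cCCj, cCCk]; exact hpowjk)
  have lt1 : CC p n j < DD p n (k - 1) :=
    lt_of_le_of_card_lt (rsub_le_dsub 0 (kd_mono (pow_dvd_pow p hjk1)))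
      (by rw [cCCj, cDDk]; omega)
  have lt2 : DD p n (j - 1) < DD p n (k - 1) :=
    lt_of_le_of_card_lt (dsub_mono 0 (kd_mono (pow_dvd_pow p (by omega))))
      (by rw [cDDj, cDDk]; omega)
  unfold alphaD
  refine quot_card _ 3
    (fun P => if 2 ∣ Nat.card P.1.1 then 2 else if 2 ∣ Nat.card P.1.2 then 1 else 0)
    (fun i => if i = 0 then ⟨(CC p n j, CC p n k), lt0, Or.inl cCCj, Or.inl cCCk⟩
      else if i = 1 then
        ⟨(CC p n j, DD p n (k - 1)), lt1, Or.inl cCCj, Or.inr ⟨hk1, cDDk⟩⟩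
      else ⟨(DD p n (j - 1), DD p n (k - 1)), lt2, Or.inr ⟨hj, cDDj⟩, Or.inr ⟨hk1, cDDk⟩⟩)
    ?_ ?_ ?_
  · rintro a b ⟨g, hg1, hg2⟩
    simp only [← hg1, ← hg2, card_map_conj]
  · intro i
    fin_cases i <;> simp [cCCj, cCCk, cDDj, cDDk, e1, e2, e3, e4]
  · rintro ⟨⟨H, K⟩, hlt, hH, hK⟩
    unfold HasRank at hH hK
    rcases hH with hH | ⟨-, hH⟩ <;> rcases hK with hK | ⟨-, hK⟩
    · -- cyclic, cyclic
      simp only [hH, hK]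
      rw [if_neg e1, if_neg e2, if_pos rfl]
      refine ⟨1, ?_, ?_⟩
      · show Subgroup.map _ (CC p n j) = H
        rw [map_conj_one]
        exact (eq_CC hp hodd hjn H hH).symm
      · show Subgroup.map _ (CC p n k) = K
        rw [map_conj_one]
        exact (eq_CC hp hodd hk K hK).symm
    · -- cyclic, dihedral
      simp only [hH, hK]
      rw [if_neg e1, if_pos e4, if_neg (by decide), if_pos rfl]
      obtain ⟨c, hKe⟩ := exists_c_eq_dsub hp hodd hk K hK
      obtain ⟨t, ht⟩ := exists_half hodd (-c)
      refine ⟨r t, ?_, ?_⟩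
      · show Subgroup.map _ (CC p n j) = H
        rw [CC, map_conj_r_rsub]
        exact (eq_CC hp hodd hjn H hH).symm
      · show Subgroup.map _ (DD p n (k - 1)) = K
        rw [DD, map_conj_r_dsub, show (0 : ZMod (p ^ n)) - t - t = c by
          rw [show (0 : ZMod (p ^ n)) - t - t = -(t + t) by ring, ht, neg_neg], hKe]
    · -- dihedral, cyclic : impossible
      exfalso
      have hd := Subgroup.card_dvd_of_le hlt.le
      rw [hH, hK] at hd
      exact e2 ((dvd_mul_right 2 _).trans hd)
    · -- dihedral, dihedral
      simp only [hH, hK]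
      rw [if_pos e3, if_neg (by decide), if_neg (by decide)]
      obtain ⟨c, hHe⟩ := exists_c_eq_dsub hp hodd hjn H hH
      obtain ⟨d, hKe⟩ := exists_c_eq_dsub hp hodd hk K hK
      have hcd : c - d ∈ kd (p ^ n) (p ^ (k - 1)) := by
        have h1 : sr c ∈ H := by
          rw [hHe, sr_mem_dsub]
          rw [sub_self]
          exact (kd (p ^ n) (p ^ (j - 1))).zero_mem
        have h2 : sr c ∈ K := hlt.le h1
        rw [hKe, sr_mem_dsub] at h2
        exact h2
      obtain ⟨t, ht⟩ := exists_half hodd (-c)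
      have harg : (0 : ZMod (p ^ n)) - t - t = c := by
        rw [show (0 : ZMod (p ^ n)) - t - t = -(t + t) by ring, ht, neg_neg]
      refine ⟨r t, ?_, ?_⟩
      · show Subgroup.map _ (DD p n (j - 1)) = H
        rw [DD, map_conj_r_dsub, harg, hHe]
      · show Subgroup.map _ (DD p n (k - 1)) = K
        rw [DD, map_conj_r_dsub, harg, dsub_congr hcd, hKe]






theorem alpha1 (hp : p.Prime) (hodd : Odd p) :
    alphaD (DihedralGroup (p ^ n)) p 0 (n + 1) = 1 := by
  have hm : p ^ n ≠ 0 := pow_ne_zero n hp.pos.ne'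
  haveI : NeZero (p ^ n) := ⟨hm⟩
  have cB : Nat.card ((⊥ : Subgroup (DihedralGroup (p ^ n)))) = 1 := Subgroup.card_bot
  have cT : Nat.card ((⊤ : Subgroup (DihedralGroup (p ^ n)))) = 2 * p ^ n := by
    rw [Subgroup.card_top, card_G hp]
  have hppos : 0 < p ^ n := pow_pos hp.pos n
  have ltBT : (⊥ : Subgroup (DihedralGroup (p ^ n))) < ⊤ :=
    lt_of_le_of_card_lt bot_le (by rw [cB, cT]; omega)
  unfold alphaD
  refine quot_card _ 1 (fun _ => 0)
    (fun _ => ⟨(⊥, ⊤), ltBT, Or.inl (by rw [cB, pow_zero]),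
      Or.inr ⟨by omega, by rw [cT]; simp⟩⟩) ?_ ?_ ?_
  · intro a b _; rfl
  · intro i; omega
  · rintro ⟨⟨H, K⟩, hlt, hH, hK⟩
    have hHb : H = ⊥ := rank_zero H hH
    have hKt : K = ⊤ := rank_top hp hodd K hK
    refine ⟨1, ?_, ?_⟩
    · show Subgroup.map _ (⊥ : Subgroup (DihedralGroup (p ^ n))) = H
      rw [map_conj_one, hHb]
    · show Subgroup.map _ (⊤ : Subgroup (DihedralGroup (p ^ n))) = K
      rw [map_conj_one, hKt]

theorem alpha2 (hp : p.Prime) (hodd : Odd p) {k : ℕ} (hk1 : 1 ≤ k) (hk : k ≤ n) :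
    alphaD (DihedralGroup (p ^ n)) p 0 k = 2 := by
  have hm : p ^ n ≠ 0 := pow_ne_zero n hp.pos.ne'
  haveI : NeZero (p ^ n) := ⟨hm⟩
  have hk1n : k - 1 ≤ n := by omega
  have e2 : ¬ (2 ∣ p ^ k) := not_two_dvd_pow hodd k
  have e4 : (2:ℕ) ∣ 2 * p ^ (k - 1) := dvd_mul_right 2 _
  have cCCk := card_CC (n := n) hp hk
  have cDDk := card_DD (n := n) hp hk1n
  have cB : Nat.card ((⊥ : Subgroup (DihedralGroup (p ^ n)))) = 1 := Subgroup.card_bot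
  have hposk : 0 < p ^ k := pow_pos hp.pos k
  have hposk1 : 0 < p ^ (k - 1) := pow_pos hp.pos (k - 1)
  have h1k : 1 < p ^ k := Nat.one_lt_pow (by omega) hp.one_lt
  have rB : HasRank p (⊥ : Subgroup (DihedralGroup (p ^ n))) 0 :=
    Or.inl (by rw [cB, pow_zero])
  have lt0 : (⊥ : Subgroup (DihedralGroup (p ^ n))) < CC p n k :=
    lt_of_le_of_card_lt bot_le (by rw [cB, cCCk]; omega)
  have lt1 : (⊥ : Subgroup (DihedralGroup (p ^ n))) < DD p n (k - 1) :=
    lt_of_le_of_card_lt bot_le (by rw [cB, cDDk]; omega)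
  unfold alphaD
  refine quot_card _ 2 (fun P => if 2 ∣ Nat.card P.1.2 then 1 else 0)
    (fun i => if i = 0 then ⟨(⊥, CC p n k), lt0, rB, Or.inl cCCk⟩
      else ⟨(⊥, DD p n (k - 1)), lt1, rB, Or.inr ⟨hk1, cDDk⟩⟩) ?_ ?_ ?_
  · rintro a b ⟨g, hg1, hg2⟩
    simp only [← hg2, card_map_conj]
  · intro i
    fin_cases i <;> simp [cCCk, cDDk, e2, e4]
  · rintro ⟨⟨H, K⟩, hlt, hH, hK⟩
    have hHb : H = ⊥ := rank_zero H hH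
    unfold HasRank at hK
    rcases hK with hK | ⟨-, hK⟩
    · simp only [hK]
      rw [if_neg e2, if_pos rfl]
      refine ⟨1, ?_, ?_⟩
      · show Subgroup.map _ (⊥ : Subgroup (DihedralGroup (p ^ n))) = H
        rw [map_conj_one, hHb]
      · show Subgroup.map _ (CC p n k) = K
        rw [map_conj_one]
        exact (eq_CC hp hodd hk K hK).symm
    · simp only [hK]
      rw [if_pos e4, if_neg (by decide)]
      obtain ⟨c, hKe⟩ := exists_c_eq_dsub hp hodd hk K hK
      obtain ⟨t, ht⟩ := exists_half hodd (-c)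
      have harg : (0 : ZMod (p ^ n)) - t - t = c := by
        rw [show (0 : ZMod (p ^ n)) - t - t = -(t + t) by ring, ht, neg_neg]
      refine ⟨r t, ?_, ?_⟩
      · show Subgroup.map _ (⊥ : Subgroup (DihedralGroup (p ^ n))) = H
        rw [Subgroup.map_bot, hHb]
      · show Subgroup.map _ (DD p n (k - 1)) = K
        rw [DD, map_conj_r_dsub, harg, hKe]

theorem alpha3 (hp : p.Prime) (hodd : Odd p) {j : ℕ} (hj1 : 1 ≤ j) (hj : j ≤ n) :
    alphaD (DihedralGroup (p ^ n)) p j (n + 1) = 2 := by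
  have hm : p ^ n ≠ 0 := pow_ne_zero n hp.pos.ne'
  haveI : NeZero (p ^ n) := ⟨hm⟩
  have hj1n : j - 1 ≤ n := by omega
  have e1 : ¬ (2 ∣ p ^ j) := not_two_dvd_pow hodd j
  have e3 : (2:ℕ) ∣ 2 * p ^ (j - 1) := dvd_mul_right 2 _
  have cCCj := card_CC (n := n) hp hj
  have cDDj := card_DD (n := n) hp hj1n
  have cT : Nat.card ((⊤ : Subgroup (DihedralGroup (p ^ n)))) = 2 * p ^ n := by
    rw [Subgroup.card_top, card_G hp]
  have rT : HasRank p (⊤ : Subgroup (DihedralGroup (p ^ n))) (n + 1) :=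
    Or.inr ⟨by omega, by rw [cT]; simp⟩
  have hpj : p ^ j ≤ p ^ n := Nat.pow_le_pow_right hp.one_le hj
  have hpj1 : p ^ (j - 1) < p ^ n := Nat.pow_lt_pow_right hp.one_lt (by omega)
  have hppos : 0 < p ^ n := pow_pos hp.pos n
  have lt0 : CC p n j < (⊤ : Subgroup (DihedralGroup (p ^ n))) :=
    lt_of_le_of_card_lt le_top (by rw [cCCj, cT]; omega)
  have lt1 : DD p n (j - 1) < (⊤ : Subgroup (DihedralGroup (p ^ n))) :=
    lt_of_le_of_card_lt le_top (by rw [cDDj, cT]; omega)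
  unfold alphaD
  refine quot_card _ 2 (fun P => if 2 ∣ Nat.card P.1.1 then 1 else 0)
    (fun i => if i = 0 then ⟨(CC p n j, ⊤), lt0, Or.inl cCCj, rT⟩
      else ⟨(DD p n (j - 1), ⊤), lt1, Or.inr ⟨hj1, cDDj⟩, rT⟩) ?_ ?_ ?_
  · rintro a b ⟨g, hg1, hg2⟩
    simp only [← hg1, card_map_conj]
  · intro i
    fin_cases i <;> simp [cCCj, cDDj, e1, e3]
  · rintro ⟨⟨H, K⟩, hlt, hH, hK⟩
    have hKt : K = ⊤ := rank_top hp hodd K hK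
    unfold HasRank at hH
    rcases hH with hH | ⟨-, hH⟩
    · simp only [hH]
      rw [if_neg e1, if_pos rfl]
      refine ⟨1, ?_, ?_⟩
      · show Subgroup.map _ (CC p n j) = H
        rw [map_conj_one]
        exact (eq_CC hp hodd hj H hH).symm
      · show Subgroup.map _ (⊤ : Subgroup (DihedralGroup (p ^ n))) = K
        rw [map_conj_one, hKt]
    · simp only [hH]
      rw [if_pos e3, if_neg (by decide)]
      obtain ⟨c, hHe⟩ := exists_c_eq_dsub hp hodd hj H hH
      obtain ⟨t, ht⟩ := exists_half hodd (-c)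
      have harg : (0 : ZMod (p ^ n)) - t - t = c := by
        rw [show (0 : ZMod (p ^ n)) - t - t = -(t + t) by ring, ht, neg_neg]
      refine ⟨r t, ?_, ?_⟩
      · show Subgroup.map _ (DD p n (j - 1)) = H
        rw [DD, map_conj_r_dsub, harg, hHe]
      · show Subgroup.map _ (⊤ : Subgroup (DihedralGroup (p ^ n))) = K
        rw [map_conj_top, hKt]

end DihedralAlphaAux

theorem dihedral_alpha (p n : ℕ) (hp : p.Prime) (hodd : Odd p) (hn : 1 ≤ n) :
    alphaD (DihedralGroup (p ^ n)) p 0 (n + 1) = 1 ∧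
    (∀ k, 1 ≤ k → k ≤ n → alphaD (DihedralGroup (p ^ n)) p 0 k = 2) ∧
    (∀ j, 1 ≤ j → j ≤ n → alphaD (DihedralGroup (p ^ n)) p j (n + 1) = 2) ∧
    (∀ j k, 1 ≤ j → j < k → k ≤ n → alphaD (DihedralGroup (p ^ n)) p j k = 3) :=
  ⟨DihedralAlphaAux.alpha1 hp hodd,
   fun _ hk1 hk2 => DihedralAlphaAux.alpha2 hp hodd hk1 hk2,
   fun _ hj1 hj2 => DihedralAlphaAux.alpha3 hp hodd hj1 hj2,
   fun _ _ hj1 hjk hk => DihedralAlphaAux.alpha4 hp hodd hj1 hjk hk⟩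
end

section
/- Let p be a prime and n ≥ 1, let 𝔽 = GaloisField p n, and let G = AGL(1,p^n) be the semidirect product of the additive group of 𝔽 by 𝔽ˣ acting by multiplication. Then the image of 𝔽ˣ in G (the complement subgroup {(0,u) : u ∈ 𝔽ˣ}) is a maximal subgroup of G. -/
/-- The canonical monoid homomorphism `AddAut A →* MulAut (Multiplicative A)`. -/
def addAutToMulAut (A : Type*) [AddGroup A] : Multiplicative (AddAut A) →* MulAut (Multiplicative A) where
  toFun f := AddEquiv.toMultiplicative f.toAdd
  map_one' := rfl
  map_mul' _ _ := rfl

/-- The action of `𝔽ˣ` on the additive group of `𝔽 = GaloisField p n`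
by field multiplication, as a map into multiplicative automorphisms. -/
noncomputable def aglAction (p n : ℕ) [Fact p.Prime] :
    (GaloisField p n)ˣ →* MulAut (Multiplicative (GaloisField p n)) :=
  (addAutToMulAut _).comp (DistribMulAction.toAddAut (GaloisField p n)ˣ (GaloisField p n))

/-- `AGL(1, p^n) = 𝔽 ⋊ 𝔽ˣ`, the affine general linear group of degree one
over the field with `p ^ n` elements. -/
noncomputable abbrev AGL1 (p n : ℕ) [Fact p.Prime] : Type :=
  Multiplicative (GaloisField p n) ⋊[aglAction p n] (GaloisField p n)ˣ

/-! A subgroup strictly containing the complement `𝔽ˣ` contains a nontrivial translation.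
Conjugating it by `𝔽ˣ` gives every translation, since `𝔽ˣ` acts transitively on `𝔽 ∖ {0}`,
and the translations together with `𝔽ˣ` generate the whole group. -/

namespace SemidirectProduct

variable {N G : Type*} [Group N] [Group G] {φ : G →* MulAut N}

theorem mem_range_inr_iff {x : N ⋊[φ] G} :
    x ∈ (inr : G →* N ⋊[φ] G).range ↔ x.left = 1 := by
  refine ⟨?_, fun h => ⟨x.right, by ext <;> simp [h]⟩⟩
  rintro ⟨g, rfl⟩
  rfl

theorem inl_left_mem_of_range_inr_le {K : Subgroup (N ⋊[φ] G)}
    (hK : (inr : G →* N ⋊[φ] G).range ≤ K) {x : N ⋊[φ] G} (hx : x ∈ K) : inl x.left ∈ K := by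
  rw [eq_mul_inv_of_mul_eq (inl_left_mul_inr_right x)]
  exact K.mul_mem hx (K.inv_mem (hK ⟨_, rfl⟩))

theorem eq_top_of_range_inr_le_of_inl_mem
    (htrans : ∀ a b : N, a ≠ 1 → b ≠ 1 → ∃ g, φ g a = b) {K : Subgroup (N ⋊[φ] G)}
    (hK : (inr : G →* N ⋊[φ] G).range ≤ K) {a : N} (ha : a ≠ 1) (haK : inl a ∈ K) :
    K = ⊤ := by
  have hinl : ∀ b, inl b ∈ K := by
    intro b
    rcases eq_or_ne b 1 with rfl | hb
    · rw [map_one]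
      exact K.one_mem
    obtain ⟨g, rfl⟩ := htrans a b ha hb
    rw [inl_aut]
    exact K.mul_mem (K.mul_mem (hK ⟨g, rfl⟩) haK) (hK ⟨g⁻¹, rfl⟩)
  refine eq_top_iff.2 fun x _ => ?_
  rw [← inl_left_mul_inr_right x]
  exact K.mul_mem (hinl _) (hK ⟨_, rfl⟩)

theorem isCoatom_range_inr [Nontrivial N]
    (htrans : ∀ a b : N, a ≠ 1 → b ≠ 1 → ∃ g, φ g a = b) :
    IsCoatom (inr : G →* N ⋊[φ] G).range := by
  refine ⟨fun h => ?_, fun K hK => ?_⟩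
  · obtain ⟨a, ha⟩ := exists_ne (1 : N)
    exact ha (mem_range_inr_iff.1 (h ▸ Subgroup.mem_top (inl a : N ⋊[φ] G)))
  · obtain ⟨x, hxK, hx⟩ := SetLike.exists_of_lt hK
    exact eq_top_of_range_inr_le_of_inl_mem htrans hK.le (mt mem_range_inr_iff.2 hx)
      (inl_left_mem_of_range_inr_le hK.le hxK)

end SemidirectProduct

theorem aglAction_apply (p n : ℕ) [Fact p.Prime] (u : (GaloisField p n)ˣ)
    (a : Multiplicative (GaloisField p n)) :
    (aglAction p n u a).toAdd = u * a.toAdd :=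
  rfl

theorem aglAction_exists_apply_eq (p n : ℕ) [Fact p.Prime]
    (a b : Multiplicative (GaloisField p n)) (ha : a ≠ 1) (hb : b ≠ 1) :
    ∃ u, aglAction p n u a = b := by
  have ha' : a.toAdd ≠ 0 := ha
  have hb' : b.toAdd ≠ 0 := hb
  refine ⟨Units.mk0 (b.toAdd / a.toAdd) (div_ne_zero hb' ha'), Multiplicative.toAdd.injective ?_⟩
  rw [aglAction_apply, Units.val_mk0, div_mul_cancel₀ _ ha']

theorem AGL1_complement_maximal_general (p n : ℕ) [Fact p.Prime] :
    IsCoatom ((SemidirectProduct.inr :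
      (GaloisField p n)ˣ →* AGL1 p n).range : Subgroup (AGL1 p n)) :=
  SemidirectProduct.isCoatom_range_inr (aglAction_exists_apply_eq p n)

theorem AGL1_complement_maximal (p n : ℕ) [Fact p.Prime] (hn : 1 ≤ n) :
    IsCoatom ((SemidirectProduct.inr :
      (GaloisField p n)ˣ →* AGL1 p n).range : Subgroup (AGL1 p n)) :=
  AGL1_complement_maximal_general p n
end

section
/- Let p be a prime, n ≥ 1, and let r be a divisor of n with r < n. Let 𝔽 = GaloisField p n and let L be the (unique) subfield of 𝔽 with p^r elements, so that 𝔽 is an L-vector space of dimension n/r. Let A be an L-subspace of 𝔽 with dim_L A = n/r − 1 (an L-hyperplane). Then for every d ∈ 𝔽ˣ, the condition d·A = A (equivalently, d·x ∈ A for all x ∈ A) holds if and only if d lies in L. In other words, the stabilizer of A in 𝔽ˣ equals Lˣ. -/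
set_option synthInstance.maxHeartbeats 800000

set_option maxHeartbeats 1000000 in
theorem hyperplane_stabilizer_eq_subfield_units (p n r : ℕ) [Fact p.Prime]
    (hn : 1 ≤ n) (hr : r ∣ n) (hrn : r < n)
    (L : Subfield (GaloisField p n)) (hL : Nat.card L = p ^ r)
    (A : Submodule L (GaloisField p n))
    (hA : Module.finrank L A = n / r - 1) :
    ∀ d : (GaloisField p n)ˣ,
      (∀ x ∈ A, (d : GaloisField p n) * x ∈ A) ↔ (d : GaloisField p n) ∈ L := by
  have hp1 : 1 < p := (Fact.out : p.Prime).one_lt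
  -- r ≥ 1
  have hLnt : Nontrivial L := ⟨⟨0, 1, fun h => zero_ne_one (congrArg Subtype.val h)⟩⟩
  have hr1 : 1 ≤ r := by
    by_contra h
    push_neg at h
    interval_cases r
    simp only [pow_zero] at hL
    have := (Finite.one_lt_card_iff_nontrivial (α := L)).mpr hLnt
    omega
  intro d
  constructor
  · intro hd
    -- The stabilizer subfield M
    set F := GaloisField p n with hF
    let M : Subfield F :=
      { carrier := {x : F | ∀ a ∈ A, x * a ∈ A}
        mul_mem' := fun {x y} hx hy a ha => by
          rw [mul_assoc]; exact hx _ (hy a ha)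
        one_mem' := fun a ha => by rw [one_mul]; exact ha
        add_mem' := fun {x y} hx hy a ha => by
          rw [add_mul]; exact A.add_mem (hx a ha) (hy a ha)
        zero_mem' := fun a ha => by rw [zero_mul]; exact A.zero_mem
        neg_mem' := fun {x} hx a ha => by rw [neg_mul]; exact A.neg_mem (hx a ha)
        inv_mem' := by
          intro x hx a ha
          by_cases hx0 : x = 0
          · rw [hx0, inv_zero, zero_mul]; exact A.zero_mem
          · have hinj : Function.Injective (fun b : A => (⟨x * b, hx b b.2⟩ : A)) := by
              intro b c hbc
              have : x * (b : F) = x * c := congrArg Subtype.val hbc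
              exact Subtype.ext (mul_left_cancel₀ hx0 this)
            have hsurj := (Finite.injective_iff_surjective).mp hinj
            obtain ⟨b, hb⟩ := hsurj ⟨a, ha⟩
            have hb' : x * (b : F) = a := congrArg Subtype.val hb
            have : x⁻¹ * a = b := by
              rw [← hb', ← mul_assoc, inv_mul_cancel₀ hx0, one_mul]
            rw [this]; exact b.2 }
    have hdM : (d : F) ∈ M := hd
    have hLM : ∀ x ∈ L, x ∈ M := by
      intro c hc a ha
      exact A.smul_mem ⟨c, hc⟩ ha
    -- cardinalities
    have hFfin : Finite F := inferInstance
    have : Fintype F := Fintype.ofFinite F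
    have : Fintype M := Fintype.ofFinite M
    have : Fintype L := Fintype.ofFinite L
    have : Fintype A := Fintype.ofFinite A
    have hFcard : Nat.card F = p ^ n := GaloisField.card (p := p) (n := n) (by omega)
    haveI : CharP M p := CharP.subring F p M.toSubring
    obtain ⟨m, -, hMcard'⟩ := FiniteField.card M p
    have hMcard : Nat.card M = p ^ (m : ℕ) := by
      rw [Nat.card_eq_fintype_card]; exact hMcard'
    -- m ∣ n
    obtain ⟨k, hk⟩ := VectorSpace.card_fintype M F
    have hmk : p ^ n = p ^ ((m : ℕ) * k) := by
      rw [← hFcard, Nat.card_eq_fintype_card, hk, ← Nat.card_eq_fintype_card, hMcard,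
        ← pow_mul]
    have hn_eq : n = (m : ℕ) * k := Nat.pow_right_injective hp1 hmk
    -- card A = p ^ (n - r)
    have hAcard : Nat.card A = p ^ (n - r) := by
      have h1 : Fintype.card A = Fintype.card L ^ Module.finrank L A :=
        Module.card_eq_pow_finrank
      rw [Nat.card_eq_fintype_card, h1, ← Nat.card_eq_fintype_card, hL, hA, ← pow_mul]
      congr 1
      have : r * (n / r) = n := Nat.mul_div_cancel' hr
      have h2 : 1 ≤ n / r := Nat.one_le_div_iff (by omega) |>.mpr (le_of_lt hrn)
      calc r * (n / r - 1) = r * (n / r) - r * 1 := by rw [Nat.mul_sub]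
        _ = n - r := by rw [this, mul_one]
    -- A as an M-submodule
    let A' : Submodule M F :=
      { carrier := A
        add_mem' := fun {x y} hx hy => A.add_mem hx hy
        zero_mem' := A.zero_mem
        smul_mem' := fun c x hx => c.2 x hx }
    have : Fintype A' := Fintype.ofFinite A'
    obtain ⟨j, hj⟩ := VectorSpace.card_fintype M A'
    have hA'A : Nat.card A' = Nat.card A :=
      Nat.card_congr (Equiv.subtypeEquivRight (fun x => Iff.rfl))
    have hmj : p ^ (n - r) = p ^ ((m : ℕ) * j) := by
      rw [← hAcard, ← hA'A, Nat.card_eq_fintype_card, hj, ← Nat.card_eq_fintype_card,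
        hMcard, ← pow_mul]
    have hnr_eq : n - r = (m : ℕ) * j := Nat.pow_right_injective hp1 hmj
    -- m ∣ r
    have hmn : (m : ℕ) ∣ n := ⟨k, hn_eq⟩
    have hmnr : (m : ℕ) ∣ n - r := ⟨j, hnr_eq⟩
    have hmr : (m : ℕ) ∣ r := by
      have := Nat.dvd_sub hmn hmnr
      rwa [Nat.sub_sub_self (le_of_lt hrn)] at this
    have hmle : (m : ℕ) ≤ r := Nat.le_of_dvd (by omega) hmr
    -- r ≤ m
    have hinj : Function.Injective (fun x : L => (⟨x, hLM x.1 x.2⟩ : M)) := by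
      intro a b hab
      have h' : ((⟨(a:F), hLM a.1 a.2⟩ : M) : F) = ((⟨(b:F), hLM b.1 b.2⟩ : M) : F) :=
        congrArg Subtype.val hab
      exact Subtype.ext h'
    have hcard_le : Nat.card L ≤ Nat.card M := Nat.card_le_card_of_injective _ hinj
    have hrle : r ≤ (m : ℕ) := by
      rw [hL, hMcard] at hcard_le
      exact (Nat.pow_le_pow_iff_right hp1).mp hcard_le
    have hmr_eq : (m : ℕ) = r := le_antisymm hmle hrle
    -- L = M as sets
    have hsub : (L : Set F) ⊆ (M : Set F) := fun x hx => hLM x hx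
    have hcards : ((M : Set F)).ncard ≤ ((L : Set F)).ncard := by
      rw [← Nat.card_coe_set_eq, ← Nat.card_coe_set_eq]
      have h1 : Nat.card (M : Set F) = Nat.card M := rfl
      have h2 : Nat.card (L : Set F) = Nat.card L := rfl
      rw [h1, h2, hL, hMcard, hmr_eq]
    have hset : (L : Set F) = (M : Set F) :=
      Set.eq_of_subset_of_ncard_le hsub hcards (Set.toFinite _)
    have : (d : F) ∈ (L : Set F) := hset ▸ hdM
    exact this
  · intro hdL x hx
    exact A.smul_mem ⟨(d : GaloisField p n), hdL⟩ hx
end
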